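/- arXiv:2111.07465 — 5 statements merged into one kernel-verified Lean document; each statement's English description precedes it below -/
import Mathlib

section
/- Let n, p be positive integers, E ⊆ {1, …, n}, and let A_1, …, A_p be n×n real matrices such that (A_l)_{ij} = 0 whenever i ∈ E and j ∉ E, for every l = 1, …, p. Define the moving-average coefficient matrices by φ_0 = I_n, φ_s = 0 for s < 0, and φ_s = A_1 φ_{s−1} + A_2 φ_{s−2} + ⋯ + A_p φ_{s−p} for s ≥ 1. Then (φ_s)_{ij} = 0 for every s ≥ 0, every i ∈ E, and every j ∉ E. Consequently, for any vector v ∈ ℝⁿ with v_j = 0 for all j ∈ E, one has e_iᵀ φ_s v = 0 for every i ∈ E and every s ≥ 0, and hence ∑_{s=0}^{h−1} (e_iᵀ φ_s v)² = 0 for every h. -/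
/-! The exogenous/endogenous pattern says that `M` is block triangular for the indicator `(· ∈ E)`
of `E`, ordered as `False < True`. Block triangular matrices form a subsemiring, and the
moving-average recursion builds `φ_s` from `1` and the `A_l` by sums and products only. -/

open Matrix

namespace Matrix

variable {m R : Type*}

theorem blockTriangular_mem_iff [Zero R] {M : Matrix m m R} {E : Set m} :
    M.BlockTriangular (· ∈ E) ↔ ∀ i j, i ∈ E → j ∉ E → M i j = 0 := by
  have hlt : ∀ i j, (j ∈ E) < (i ∈ E) ↔ j ∉ E ∧ i ∈ E := fun _ _ => by
    simp only [lt_iff_le_not_ge, le_Prop_eq]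
    tauto
  exact ⟨fun h i j hi hj => h ((hlt i j).2 ⟨hj, hi⟩),
    fun h i j hij => h i j ((hlt i j).1 hij).2 ((hlt i j).1 hij).1⟩

theorem BlockTriangular.mulVec_apply_eq_zero [Fintype m] [NonUnitalNonAssocSemiring R]
    {M : Matrix m m R} {E : Set m} (hM : M.BlockTriangular (· ∈ E)) {v : m → R}
    (hv : ∀ j ∈ E, v j = 0) {i : m} (hi : i ∈ E) : (M *ᵥ v) i = 0 := by
  simp only [mulVec, dotProduct]
  refine Finset.sum_eq_zero fun j _ => ?_
  by_cases hj : j ∈ E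
  · rw [hv j hj, mul_zero]
  · rw [blockTriangular_mem_iff.mp hM i j hi hj, zero_mul]

end Matrix

theorem Subsemiring.forall_mem_of_recurrence {R : Type*} [Semiring R] (S : Subsemiring R)
    {p : ℕ} {A : Fin p → R} (hA : ∀ l, A l ∈ S) {φ : ℕ → R} (hφ0 : φ 0 ∈ S)
    (hφrec : ∀ s : ℕ, φ (s + 1) = ∑ l : Fin p, if (l : ℕ) ≤ s then A l * φ (s - l) else 0)
    (s : ℕ) : φ s ∈ S := by
  induction s using Nat.strong_induction_on with
  | _ s ih =>
    cases s with
    | zero => exact hφ0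
    | succ s =>
      rw [hφrec s]
      refine S.sum_mem fun l _ => ?_
      split_ifs
      · exact S.mul_mem (hA l) (ih _ (by omega))
      · exact S.zero_mem

theorem ma_matrices_inherit_exo_endo_pattern_general
    (n p : ℕ)
    (E : Set (Fin n))
    (A : Fin p → Matrix (Fin n) (Fin n) ℝ)
    (hA : ∀ (l : Fin p) (i j : Fin n), i ∈ E → j ∉ E → A l i j = 0)
    (φ : ℕ → Matrix (Fin n) (Fin n) ℝ)
    (hφ0 : φ 0 = 1)
    (hφrec : ∀ s : ℕ,
      φ (s + 1) = ∑ l : Fin p, if (l : ℕ) ≤ s then A l * φ (s - (l : ℕ)) else 0) :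
    (∀ (s : ℕ) (i j : Fin n), i ∈ E → j ∉ E → φ s i j = 0) ∧
      (∀ v : Fin n → ℝ, (∀ j ∈ E, v j = 0) →
        ∀ i ∈ E,
          (∀ s : ℕ, (φ s).mulVec v i = 0) ∧
          (∀ h : ℕ, ∑ s ∈ Finset.range h, ((φ s).mulVec v i) ^ 2 = 0)) := by
  have hφ : ∀ s, (φ s).BlockTriangular (· ∈ E) :=
    (blockTriangularSubsemiring ℝ (· ∈ E)).forall_mem_of_recurrence
      (fun l => blockTriangular_mem_iff.mpr (hA l)) (hφ0 ▸ blockTriangular_one) hφrec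
  refine ⟨fun s => blockTriangular_mem_iff.mp (hφ s), fun v hv i hi => ?_⟩
  have hφv : ∀ s, (φ s *ᵥ v) i = 0 := fun s => (hφ s).mulVec_apply_eq_zero hv hi
  exact ⟨hφv, fun h => Finset.sum_eq_zero fun s _ => by rw [hφv s, sq, mul_zero]⟩

/-- Theorem 2 of the paper: if each VAR coefficient matrix `A l`
has the exogenous/endogenous pattern (`(A l) i j = 0` for `i ∈ E`, `j ∉ E`),
then the moving-average matrices `φ_s` (with `φ_0 = I`, `φ_s = 0` for `s < 0`,
and `φ_s = ∑_l A_l φ_{s-l}` for `s ≥ 1`) have the same pattern; consequently,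
for every vector `v` vanishing on `E` and every `i ∈ E`, `e_iᵀ φ_s v = 0` for
all `s`, and `∑_{s<h} (e_iᵀ φ_s v)² = 0` for every `h`. -/
theorem ma_matrices_inherit_exo_endo_pattern
    (n p : ℕ) (hn : 0 < n) (hp : 0 < p)
    (E : Set (Fin n))
    (A : Fin p → Matrix (Fin n) (Fin n) ℝ)
    (hA : ∀ (l : Fin p) (i j : Fin n), i ∈ E → j ∉ E → A l i j = 0)
    (φ : ℕ → Matrix (Fin n) (Fin n) ℝ)
    (hφ0 : φ 0 = 1)
    (hφrec : ∀ s : ℕ,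
      φ (s + 1) = ∑ l : Fin p, if (l : ℕ) ≤ s then A l * φ (s - (l : ℕ)) else 0) :
    (∀ (s : ℕ) (i j : Fin n), i ∈ E → j ∉ E → φ s i j = 0) ∧
      (∀ v : Fin n → ℝ, (∀ j ∈ E, v j = 0) →
        ∀ i ∈ E,
          (∀ s : ℕ, (φ s).mulVec v i = 0) ∧
          (∀ h : ℕ, ∑ s ∈ Finset.range h, ((φ s).mulVec v i) ^ 2 = 0)) :=
  ma_matrices_inherit_exo_endo_pattern_general n p E A hA φ hφ0 hφrec
end

section
/- Let F be an n×n diagonal real matrix with strictly positive diagonal entries, let φ_s (s = 0, 1, 2, …) be n×n real matrices, and let L be an n×n real matrix. Define φ̃_s = F φ_s F⁻¹ and L̃ = F L. Then for every i, j and every s, e_iᵀ φ̃_s (L̃ e_j) = F_{ii} · e_iᵀ φ_s (L e_j); consequently, for every h, ∑_{s=0}^{h−1} (e_iᵀ φ̃_s L̃ e_j)² = (F_{ii})² ∑_{s=0}^{h−1} (e_iᵀ φ_s L e_j)², and whenever ∑_{s=0}^{h−1} ∑_{z=1}^n (e_iᵀ φ_s L e_z)² ≠ 0 the variance-share ratios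 coincide: (∑_{s=0}^{h−1} (e_iᵀ φ̃_s L̃ e_j)²) / (∑_{s=0}^{h−1} ∑_{z=1}^n (e_iᵀ φ̃_s L̃ e_z)²) = (∑_{s=0}^{h−1} (e_iᵀ φ_s L e_j)²) / (∑_{s=0}^{h−1} ∑_{z=1}^n (e_iᵀ φ_s L e_z)²). -/
open Matrix

namespace Matrix

variable {n R : Type*} [Fintype n] [DecidableEq n]

theorem IsDiag.mul_apply [NonUnitalNonAssocSemiring R] {F : Matrix n n R} (hF : F.IsDiag)
    (M : Matrix n n R) (i j : n) : (F * M) i j = F i i * M i j := by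
  conv_lhs => rw [← hF.diagonal_diag]
  exact diagonal_mul _ _ _ _

theorem IsDiag.isUnit_det [CommRing R] {F : Matrix n n R} (hF : F.IsDiag)
    (hunit : ∀ i, IsUnit (F i i)) : IsUnit F.det := by
  rw [← hF.diagonal_diag, det_diagonal]
  exact IsUnit.prod_univ_iff.2 hunit

theorem mul_mul_inv_mul_mul [CommRing R] {F : Matrix n n R} (hF : IsUnit F.det)
    (A B : Matrix n n R) : F * A * F⁻¹ * (F * B) = F * (A * B) := by
  rw [Matrix.mul_assoc (F * A), ← Matrix.mul_assoc F⁻¹, nonsing_inv_mul F hF, Matrix.one_mul,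
    Matrix.mul_assoc]

theorem IsDiag.conj_mul_mul_apply [Field R] {F : Matrix n n R} (hF : F.IsDiag)
    (hdiag : ∀ i, F i i ≠ 0) (A B : Matrix n n R) (i j : n) :
    (F * A * F⁻¹ * (F * B)) i j = F i i * (A * B) i j := by
  rw [mul_mul_inv_mul_mul (hF.isUnit_det fun i => (hdiag i).isUnit), hF.mul_apply]

end Matrix

theorem variance_shares_invariant_under_diagonal_rescaling_general
    (n : ℕ)
    (F : Matrix (Fin n) (Fin n) ℝ)
    (hFdiag : ∀ i j : Fin n, i ≠ j → F i j = 0)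
    (hFpos : ∀ i : Fin n, 0 < F i i)
    (φ : ℕ → Matrix (Fin n) (Fin n) ℝ)
    (L : Matrix (Fin n) (Fin n) ℝ) :
    (∀ (i j : Fin n) (s : ℕ),
        (F * φ s * F⁻¹ * (F * L)) i j = F i i * ((φ s * L) i j)) ∧
    (∀ (i j : Fin n) (h : ℕ),
        ∑ s ∈ Finset.range h, ((F * φ s * F⁻¹ * (F * L)) i j) ^ 2 =
          (F i i) ^ 2 * ∑ s ∈ Finset.range h, ((φ s * L) i j) ^ 2) ∧
    (∀ (i j : Fin n) (h : ℕ),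
        (∑ s ∈ Finset.range h, ∑ z : Fin n, ((φ s * L) i z) ^ 2) ≠ 0 →
        (∑ s ∈ Finset.range h, ((F * φ s * F⁻¹ * (F * L)) i j) ^ 2) /
            (∑ s ∈ Finset.range h, ∑ z : Fin n, ((F * φ s * F⁻¹ * (F * L)) i z) ^ 2) =
          (∑ s ∈ Finset.range h, ((φ s * L) i j) ^ 2) /
            (∑ s ∈ Finset.range h, ∑ z : Fin n, ((φ s * L) i z) ^ 2)) := by
  have entry := IsDiag.conj_mul_mul_apply hFdiag (fun i => (hFpos i).ne')
  refine ⟨fun i j s => entry (φ s) L i j, fun i j h => ?_, fun i j h _ => ?_⟩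
  · simp only [entry, mul_pow, ← Finset.mul_sum]
  · simp only [entry, mul_pow, ← Finset.mul_sum]
    exact mul_div_mul_left _ _ (pow_ne_zero 2 (hFpos i).ne')

/-- core of Theorem 3 of the paper: rescaling by a positive
diagonal matrix `F` (so `φ̃_s = F φ_s F⁻¹`, `L̃ = F L`) multiplies
`e_iᵀ φ_s (L e_j)` by `F i i`; hence the partial sums of squares are scaled by
`(F i i)²` and the variance-share ratios are unchanged. -/
theorem variance_shares_invariant_under_diagonal_rescaling
    (n : ℕ) (hn : 0 < n)
    (F : Matrix (Fin n) (Fin n) ℝ)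
    (hFdiag : ∀ i j : Fin n, i ≠ j → F i j = 0)
    (hFpos : ∀ i : Fin n, 0 < F i i)
    (φ : ℕ → Matrix (Fin n) (Fin n) ℝ)
    (L : Matrix (Fin n) (Fin n) ℝ) :
    (∀ (i j : Fin n) (s : ℕ),
        (F * φ s * F⁻¹ * (F * L)) i j = F i i * ((φ s * L) i j)) ∧
    (∀ (i j : Fin n) (h : ℕ),
        ∑ s ∈ Finset.range h, ((F * φ s * F⁻¹ * (F * L)) i j) ^ 2 =
          (F i i) ^ 2 * ∑ s ∈ Finset.range h, ((φ s * L) i j) ^ 2) ∧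
    (∀ (i j : Fin n) (h : ℕ),
        (∑ s ∈ Finset.range h, ∑ z : Fin n, ((φ s * L) i z) ^ 2) ≠ 0 →
        (∑ s ∈ Finset.range h, ((F * φ s * F⁻¹ * (F * L)) i j) ^ 2) /
            (∑ s ∈ Finset.range h, ∑ z : Fin n, ((F * φ s * F⁻¹ * (F * L)) i z) ^ 2) =
          (∑ s ∈ Finset.range h, ((φ s * L) i j) ^ 2) /
            (∑ s ∈ Finset.range h, ∑ z : Fin n, ((φ s * L) i z) ^ 2)) :=
  variance_shares_invariant_under_diagonal_rescaling_general n F hFdiag hFpos φ L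
end

section
/- Let n ≥ 2 and let Z be an (n−1)×(n−1) real matrix such that I − Z is invertible and (I − Z)⁻¹ has nonnegative entries. Let α, β ∈ ℝ^{n−1} have nonnegative entries, let c ≥ 0, and let 1 denote the all-ones vector in ℝ^{n−1}. Suppose x₀ ∈ ℝ and x ∈ ℝ^{n−1} satisfy the two equations x₀ + 1ᵀ x = 0 and (I − Z) x − x₀ α = −c β. Then x₀ = c · (1ᵀ (I − Z)⁻¹ β) / (1 + 1ᵀ (I − Z)⁻¹ α), this value is nonnegative, and x = (I − Z)⁻¹ (x₀ α − c β). -/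
open Matrix

/-! Invert `I - Z` in the second equation to get `x = (I - Z)⁻¹ (x₀ α - c β)`. Summing the
entries turns the first equation into the scalar equation
`x₀ (1 + 1ᵀ (I - Z)⁻¹ α) = c · 1ᵀ (I - Z)⁻¹ β`, whose coefficients are nonnegative because
`(I - Z)⁻¹`, `α` and `β` are. -/

namespace Matrix

variable {m n R : Type*} [Fintype n]

lemma eq_nonsing_inv_mulVec_of_mulVec_eq [DecidableEq n] [CommRing R] {A : Matrix n n R}
    (hA : IsUnit A) {x b : n → R} (h : A *ᵥ x = b) : x = A⁻¹ *ᵥ b := by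
  rw [← h, mulVec_mulVec, nonsing_inv_mul A ((isUnit_iff_isUnit_det A).mp hA), one_mulVec]

variable [Semiring R] [PartialOrder R] [IsOrderedRing R]

lemma mulVec_apply_nonneg {M : Matrix m n R} (hM : ∀ i j, 0 ≤ M i j) {v : n → R}
    (hv : ∀ j, 0 ≤ v j) (i : m) : 0 ≤ (M *ᵥ v) i :=
  Finset.sum_nonneg fun j _ => mul_nonneg (hM i j) (hv j)

lemma sum_mulVec_nonneg [Fintype m] {M : Matrix m n R} (hM : ∀ i j, 0 ≤ M i j) {v : n → R}
    (hv : ∀ j, 0 ≤ v j) : 0 ≤ ∑ i, (M *ᵥ v) i :=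
  Finset.sum_nonneg fun i _ => mulVec_apply_nonneg hM hv i

end Matrix

theorem causality_derivative_formula_general
    (n : ℕ)
    (Z : Matrix (Fin (n - 1)) (Fin (n - 1)) ℝ)
    (hinv : IsUnit (1 - Z))
    (hnonneg : ∀ i j : Fin (n - 1), 0 ≤ (1 - Z)⁻¹ i j)
    (α β : Fin (n - 1) → ℝ)
    (hα : ∀ i, 0 ≤ α i) (hβ : ∀ i, 0 ≤ β i)
    (c : ℝ) (hc : 0 ≤ c)
    (x₀ : ℝ) (x : Fin (n - 1) → ℝ)
    (heq1 : x₀ + ∑ i, x i = 0)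
    (heq2 : (1 - Z).mulVec x - x₀ • α = -(c • β)) :
    x₀ = c * (∑ i, ((1 - Z)⁻¹.mulVec β) i) / (1 + ∑ i, ((1 - Z)⁻¹.mulVec α) i) ∧
    0 ≤ x₀ ∧
    x = (1 - Z)⁻¹.mulVec (x₀ • α - c • β) := by
  have hx : x = (1 - Z)⁻¹ *ᵥ (x₀ • α - c • β) :=
    eq_nonsing_inv_mulVec_of_mulVec_eq hinv <| by
      rw [sub_eq_iff_eq_add.mp heq2, neg_add_eq_sub]
  set Sα := ∑ i, ((1 - Z)⁻¹ *ᵥ α) i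
  set Sβ := ∑ i, ((1 - Z)⁻¹ *ᵥ β) i
  have hSα : 0 ≤ Sα := sum_mulVec_nonneg hnonneg hα
  have hSβ : 0 ≤ Sβ := sum_mulVec_nonneg hnonneg hβ
  have hsum : ∑ i, x i = x₀ * Sα - c * Sβ := by
    simp only [hx, mulVec_sub, mulVec_smul, Pi.sub_apply, Pi.smul_apply, smul_eq_mul,
      Finset.sum_sub_distrib, ← Finset.mul_sum, Sα, Sβ]
  have hx₀ : x₀ = c * Sβ / (1 + Sα) := by
    rw [eq_div_iff (by positivity)]
    linarith
  exact ⟨hx₀, hx₀ ▸ by positivity, hx⟩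

/-- Theorem 5 of the paper, derivative of the causality
distribution: given an `(n-1)×(n-1)` matrix `Z` with `I - Z` invertible and
`(I - Z)⁻¹` entrywise nonnegative, nonnegative vectors `α, β`, a constant
`c ≥ 0`, and `x₀, x` satisfying `x₀ + 1ᵀ x = 0` and `(I - Z) x - x₀ α = -c β`,
we have the explicit formula
`x₀ = c (1ᵀ (I - Z)⁻¹ β) / (1 + 1ᵀ (I - Z)⁻¹ α) ≥ 0` and
`x = (I - Z)⁻¹ (x₀ α - c β)`. -/
theorem causality_derivative_formula
    (n : ℕ) (hn : 2 ≤ n)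
    (Z : Matrix (Fin (n - 1)) (Fin (n - 1)) ℝ)
    (hinv : IsUnit (1 - Z))
    (hnonneg : ∀ i j : Fin (n - 1), 0 ≤ (1 - Z)⁻¹ i j)
    (α β : Fin (n - 1) → ℝ)
    (hα : ∀ i, 0 ≤ α i) (hβ : ∀ i, 0 ≤ β i)
    (c : ℝ) (hc : 0 ≤ c)
    (x₀ : ℝ) (x : Fin (n - 1) → ℝ)
    (heq1 : x₀ + ∑ i, x i = 0)
    (heq2 : (1 - Z).mulVec x - x₀ • α = -(c • β)) :
    x₀ = c * (∑ i, ((1 - Z)⁻¹.mulVec β) i) / (1 + ∑ i, ((1 - Z)⁻¹.mulVec α) i) ∧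
    0 ≤ x₀ ∧
    x = (1 - Z)⁻¹.mulVec (x₀ • α - c • β) :=
  causality_derivative_formula_general n Z hinv hnonneg α β hα hβ c hc x₀ x heq1 heq2
end

section
/- Let T be an m×m real matrix with nonnegative entries whose row sums are all at most 1, i.e., ∑_{j} T(i,j) ≤ 1 for every i. Suppose there is no nonempty subset S of {1, …, m} such that ∑_{j∈S} T(i,j) = 1 for every i ∈ S. Then the powers of T converge to the zero matrix: T^t → 0 entrywise as t → ∞. -/
/-!
The row sums `T ^ t *ᵥ 1` are at most `1` and nonincreasing in `t`. The indices at which they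
stay equal to `1` forever form a closed class: a row of `T` summing against `T ^ t *ᵥ 1 ≤ 1` to
`1` can only charge indices where `T ^ t *ᵥ 1` is `1`. Without a closed class every row sum
eventually drops below `1`, so some power `T ^ N` has ℓ∞ operator norm (maximal absolute row sum)
below `1`, and the powers of `T` decay geometrically.
-/

open Matrix Filter Topology

theorem tendsto_pow_atTop_nhds_zero_of_norm_pow_lt_one {R : Type*} [SeminormedRing R] {x : R}
    {N : ℕ} (hN : 0 < N) (h : ‖x ^ N‖ < 1) : Tendsto (x ^ ·) atTop (𝓝 0) := by
  set C := ∑ r ∈ Finset.range N, ‖x ^ r‖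
  have hbound (n : ℕ) : ‖x ^ n‖ ≤ C * ‖(x ^ N) ^ (n / N)‖ := calc
    ‖x ^ n‖ = ‖x ^ (n % N) * (x ^ N) ^ (n / N)‖ := by rw [← pow_mul, ← pow_add, Nat.mod_add_div]
    _ ≤ ‖x ^ (n % N)‖ * ‖(x ^ N) ^ (n / N)‖ := norm_mul_le _ _
    _ ≤ C * ‖(x ^ N) ^ (n / N)‖ := by
      gcongr
      exact Finset.single_le_sum (fun r _ => norm_nonneg (x ^ r))
        (Finset.mem_range.2 (Nat.mod_lt n hN))
  refine squeeze_zero_norm hbound ?_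
  simpa using ((tendsto_pow_atTop_nhds_zero_of_norm_lt_one h).norm.comp
    (Nat.tendsto_div_const_atTop hN.ne')).const_mul C

namespace Matrix

section LinftyOpNorm

attribute [local instance] Matrix.linftyOpSeminormedAddCommGroup

theorem linfty_opNorm_lt_iff {m n α : Type*} [Fintype m] [Fintype n] [SeminormedAddCommGroup α]
    {r : ℝ} (hr : 0 < r) (A : Matrix m n α) : ‖A‖ < r ↔ ∀ i, ∑ j, ‖A i j‖ < r := by
  lift r to NNReal using hr.le
  rw [linfty_opNorm_def, NNReal.coe_lt_coe, Finset.sup_lt_iff (by simpa using hr)]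
  simp [← NNReal.coe_lt_coe]

end LinftyOpNorm

variable {ι : Type*} [Fintype ι] {T : Matrix ι ι ℝ}

theorem mulVec_le_mulVec_of_nonneg (hT : ∀ i j, 0 ≤ T i j) {v w : ι → ℝ} (h : v ≤ w) :
    T *ᵥ v ≤ T *ᵥ w :=
  fun i => Finset.sum_le_sum fun j _ => mul_le_mul_of_nonneg_left (h j) (hT i j)

theorem eq_one_of_mulVec_apply_eq_one (hT : ∀ i j, 0 ≤ T i j) (hrow : T *ᵥ 1 ≤ 1)
    {v : ι → ℝ} (hv : v ≤ 1) {i j : ι} (hi : (T *ᵥ v) i = 1) (hij : T i j ≠ 0) : v j = 1 := by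
  have hterm (k : ι) : 0 ≤ T i k * (1 - v k) := mul_nonneg (hT i k) (sub_nonneg.2 (hv k))
  have hsum : ∑ k, T i k * (1 - v k) = (T *ᵥ 1) i - (T *ᵥ v) i := by
    simp [mulVec, dotProduct, mul_sub]
  have hzero : T i j * (1 - v j) = 0 :=
    (Finset.sum_eq_zero_iff_of_nonneg fun k _ => hterm k).1
      (le_antisymm (by linarith [hrow i, show (1 : ι → ℝ) i = 1 from rfl])
        (Finset.sum_nonneg fun k _ => hterm k)) j (Finset.mem_univ j)
  exact (sub_eq_zero.1 ((mul_eq_zero.1 hzero).resolve_left hij)).symm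

variable [DecidableEq ι]

theorem pow_mulVec_one_le_one (hT : ∀ i j, 0 ≤ T i j) (hrow : T *ᵥ 1 ≤ 1) (t : ℕ) :
    T ^ t *ᵥ 1 ≤ 1 := by
  induction t with
  | zero => simp
  | succ t ih => calc
      T ^ (t + 1) *ᵥ 1 = T *ᵥ (T ^ t *ᵥ 1) := by rw [pow_succ', mulVec_mulVec]
      _ ≤ T *ᵥ 1 := mulVec_le_mulVec_of_nonneg hT ih
      _ ≤ 1 := hrow

theorem antitone_pow_mulVec_one (hT : ∀ i j, 0 ≤ T i j) (hrow : T *ᵥ 1 ≤ 1) :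
    Antitone fun t : ℕ => T ^ t *ᵥ 1 :=
  antitone_nat_of_succ_le fun t => calc
    T ^ (t + 1) *ᵥ 1 = T ^ t *ᵥ (T *ᵥ 1) := by rw [pow_succ, mulVec_mulVec]
    _ ≤ T ^ t *ᵥ 1 := mulVec_le_mulVec_of_nonneg (pow_apply_nonneg hT t) hrow

theorem exists_closed_of_pow_mulVec_one_apply_eq_one (hT : ∀ i j, 0 ≤ T i j)
    (hrow : T *ᵥ 1 ≤ 1) {i₀ : ι} (hi₀ : ∀ t, (T ^ t *ᵥ 1) i₀ = 1) :
    ∃ S : Finset ι, S.Nonempty ∧ ∀ i ∈ S, ∑ j ∈ S, T i j = 1 := by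
  classical
  set S : Finset ι := {i | ∀ t, (T ^ t *ᵥ 1) i = 1}
  refine ⟨S, ⟨i₀, by simpa [S] using hi₀⟩, fun i hi => ?_⟩
  simp only [S, Finset.mem_filter, Finset.mem_univ, true_and] at hi
  have hsupp (j : ι) (hij : T i j ≠ 0) : j ∈ S := by
    simp only [S, Finset.mem_filter, Finset.mem_univ, true_and]
    refine fun t => eq_one_of_mulVec_apply_eq_one hT hrow (pow_mulVec_one_le_one hT hrow t) ?_ hij
    rw [mulVec_mulVec, ← pow_succ', hi]
  calc ∑ j ∈ S, T i j = ∑ j, T i j :=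
        Finset.sum_subset S.subset_univ fun j _ hj => not_imp_comm.1 (hsupp j) hj
    _ = 1 := by simpa [mulVec, dotProduct] using hi 1

theorem eventually_pow_mulVec_one_lt_one (hT : ∀ i j, 0 ≤ T i j) (hrow : T *ᵥ 1 ≤ 1)
    (hS : ¬ ∃ S : Finset ι, S.Nonempty ∧ ∀ i ∈ S, ∑ j ∈ S, T i j = 1) :
    ∀ᶠ t in atTop, ∀ i, (T ^ t *ᵥ 1) i < 1 := by
  refine eventually_all.2 fun i => ?_
  obtain ⟨t, ht⟩ : ∃ t, (T ^ t *ᵥ 1) i < 1 := by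
    by_contra! h
    exact hS (exists_closed_of_pow_mulVec_one_apply_eq_one hT hrow fun t =>
      le_antisymm (pow_mulVec_one_le_one hT hrow t i) (h t))
  exact eventually_atTop.2 ⟨t, fun s hs => (antitone_pow_mulVec_one hT hrow hs i).trans_lt ht⟩

end Matrix

/-- Theorem 6 of the paper: if `T` is an `m×m` substochastic
matrix (nonnegative entries, row sums at most `1`) having no nonempty subset
`S` of indices on which it is stochastic (`∑_{j∈S} T i j = 1` for all `i ∈ S`),
then the powers of `T` converge entrywise to zero. -/
theorem substochastic_no_closed_class_powers_tendsto_zero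
    (m : ℕ) (T : Matrix (Fin m) (Fin m) ℝ)
    (hnonneg : ∀ i j : Fin m, 0 ≤ T i j)
    (hrow : ∀ i : Fin m, ∑ j, T i j ≤ 1)
    (hnoclosed : ¬ ∃ S : Finset (Fin m), S.Nonempty ∧
      ∀ i ∈ S, ∑ j ∈ S, T i j = 1) :
    ∀ i j : Fin m, Tendsto (fun t : ℕ => (T ^ t) i j) atTop (𝓝 0) := by
  let _ : NormedRing (Matrix (Fin m) (Fin m) ℝ) := Matrix.linftyOpNormedRing
  have hrow' : T *ᵥ 1 ≤ 1 := fun i => by simpa [mulVec, dotProduct] using hrow i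
  obtain ⟨N, hN, hlt⟩ := ((eventually_gt_atTop 0).and
    (eventually_pow_mulVec_one_lt_one hnonneg hrow' hnoclosed)).exists
  have hnorm : ‖T ^ N‖ < 1 := (linfty_opNorm_lt_iff one_pos (T ^ N)).2 fun i => by
    simpa [mulVec, dotProduct, abs_of_nonneg (pow_apply_nonneg hnonneg N i _)] using hlt i
  intro i j
  exact ((continuous_apply_apply i j).tendsto 0).comp
    (tendsto_pow_atTop_nhds_zero_of_norm_pow_lt_one hN hnorm)
end

section
/- Let Ω be an n×n row-stochastic real matrix and let C and T be disjoint subsets of {1, …, n} such that: (i) Ω(i,j) = 0 for every i ∈ C and j ∉ C (C is closed); and (ii) Ω(k,j) = 0 for every k ∉ C ∪ T and j ∈ C ∪ T. Let Ω_C = (Ω(i,j))_{i,j∈C} and T_e = (Ω(i,j))_{i,j∈T}. Assume that T_e^t → 0 entrywise as t → ∞, and that there is a vector π^c ∈ ℝ^C with nonnegative entries summing to 1 such that (Ω_C)^t converges entrywise, as t → ∞, to the matrix all of whose rows equal π^c. Define b ∈ ℝ^T by b_i = ∑_{j∈C} Ω(i,j) and μ^c = (I − T_e)⁻¹ b. Then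 for every i ∈ T and j ∈ C, lim_{t→∞} (Ω^t)(i,j) = π^c_j · μ^c_i. -/
/-!
Write `X t` for the `T × C` block of `Ω ^ t`. Because `C` is closed and nothing outside `C ∪ T`
feeds into `C ∪ T`, these blocks obey the affine recursion `X (t + 1) = T_e * X t + c t` with
forcing term `c t = Ω_{T,C} * Ω_C ^ t`, which tends to `b π^cᵀ`. As `T_e ^ t → 0`, the powers of
`T_e` are eventually contractions, so `∑ ‖T_e ^ t‖ < ∞`, and `1 - T_e` is invertible (a fixed
vector of `T_e` is fixed by all its powers). The deviation from the fixed point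
`L = (1 - T_e)⁻¹ b π^cᵀ` then satisfies the same recursion with a vanishing forcing term, and is a
convolution of a summable sequence with a null sequence, hence tends to `0`.
-/

open Matrix Filter Topology Finset

theorem norm_pow_mul_add_le {R : Type*} [SeminormedRing R] (x : R) (N q m : ℕ) :
    ‖x ^ (q * N + m)‖ ≤ ‖x ^ N‖ ^ q * ‖x ^ m‖ := by
  induction q with
  | zero => simp
  | succ q ih =>
    calc ‖x ^ ((q + 1) * N + m)‖ = ‖x ^ N * x ^ (q * N + m)‖ := by
          rw [← pow_add]; ring_nf
      _ ≤ ‖x ^ N‖ * ‖x ^ (q * N + m)‖ := norm_mul_le _ _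
      _ ≤ ‖x ^ N‖ * (‖x ^ N‖ ^ q * ‖x ^ m‖) := by gcongr
      _ = ‖x ^ N‖ ^ (q + 1) * ‖x ^ m‖ := by ring

theorem summable_norm_pow_of_tendsto_pow_zero {R : Type*} [SeminormedRing R] {x : R}
    (h : Tendsto (x ^ ·) atTop (𝓝 0)) : Summable (‖x ^ ·‖) := by
  obtain ⟨N, hN⟩ : ∃ N, ‖x ^ (N + 1)‖ < 1 :=
    ((tendsto_norm_zero.comp h).eventually (gt_mem_nhds one_pos)).exists_forall_of_atTop
      |>.imp fun N hN => hN (N + 1) N.le_succ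
  -- Split `n = q (N + 1) + m` with `m ≤ N`: the `q`-dependence is geometric with ratio `< 1`.
  rw [← (Nat.divModEquiv (N + 1)).symm.summable_iff]
  refine Summable.of_nonneg_of_le (fun _ => norm_nonneg _)
    (fun p => norm_pow_mul_add_le x (N + 1) p.1 p.2) ?_
  exact summable_mul_of_summable_norm (f := fun q : ℕ => ‖x ^ (N + 1)‖ ^ q)
    (g := fun m : Fin (N + 1) => ‖x ^ (m : ℕ)‖)
    (by simpa using summable_geometric_of_lt_one (norm_nonneg _) hN) Summable.of_finite

theorem tendsto_sum_range_mul_of_summable_of_tendsto_zero {u v : ℕ → ℝ} (hu : Summable u)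
    (hv : Tendsto v atTop (𝓝 0)) :
    Tendsto (fun t => ∑ s ∈ range t, u s * v (t - 1 - s)) atTop (𝓝 0) := by
  obtain ⟨D, hD⟩ := (tendsto_norm_zero.comp hv).bddAbove_range
  set f : ℕ → ℕ → ℝ := fun t s => if s < t then u s * v (t - 1 - s) else 0
  have hf : ∀ t, ∑' s, f t s = ∑ s ∈ range t, u s * v (t - 1 - s) := fun t => by
    rw [tsum_eq_sum (s := range t) fun s hs => if_neg (by simpa using hs)]
    exact sum_congr rfl fun s hs => if_pos (mem_range.mp hs)
  have hlim : ∀ s, Tendsto (f · s) atTop (𝓝 0) := fun s => by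
    have : Tendsto (fun t => u s * v (t - (s + 1))) atTop (𝓝 0) := by
      simpa using (hv.comp (tendsto_sub_atTop_nat (s + 1))).const_mul (u s)
    refine this.congr' ?_
    filter_upwards [eventually_gt_atTop s] with t ht
    simp [f, ht, Nat.sub_sub, add_comm 1 s]
  have := tendsto_tsum_of_dominated_convergence (hu.norm.mul_right D) hlim
    (Eventually.of_forall fun t s => ?_)
  · simpa [hf] using this
  · simp only [f]
    split_ifs
    · rw [norm_mul]
      exact mul_le_mul_of_nonneg_left (hD ⟨t - 1 - s, rfl⟩) (norm_nonneg _)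
    · simpa using mul_nonneg (norm_nonneg (u s)) ((norm_nonneg (v 0)).trans (hD ⟨0, rfl⟩))

namespace Matrix

section Closed

variable {ι R : Type*} [Fintype ι] [DecidableEq ι] [Semiring R] {M : Matrix ι ι R}

theorem pow_apply_eq_zero_of_closed {s : Finset ι} (hs : ∀ i ∈ s, ∀ j ∉ s, M i j = 0) (t : ℕ)
    {i j : ι} (hi : i ∈ s) (hj : j ∉ s) : (M ^ t) i j = 0 := by
  induction t generalizing i with
  | zero => exact one_apply_ne (ne_of_mem_of_not_mem hi hj)
  | succ t ih =>
    rw [pow_succ', mul_apply]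
    refine sum_eq_zero fun l _ => ?_
    by_cases hl : l ∈ s
    · rw [ih hl, mul_zero]
    · rw [hs i hi l hl, zero_mul]

theorem submatrix_pow_of_closed {s : Finset ι} (hs : ∀ i ∈ s, ∀ j ∉ s, M i j = 0) (t : ℕ) :
    (M ^ t).submatrix ((↑) : s → ι) ((↑) : s → ι) =
      M.submatrix ((↑) : s → ι) ((↑) : s → ι) ^ t := by
  induction t with
  | zero => exact submatrix_one _ Subtype.val_injective
  | succ t ih =>
    ext i j
    rw [pow_succ', pow_succ', ← ih, submatrix_apply, mul_apply, mul_apply]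
    refine (Fintype.sum_subset fun l hl => by_contra fun hls => hl ?_).symm.trans
      (sum_coe_sort s _).symm
    rw [hs i i.2 l hls, zero_mul]

theorem submatrix_pow_succ_of_closed {C T : Finset ι} (hCT : Disjoint C T)
    (hC : ∀ i ∈ C, ∀ j ∉ C, M i j = 0) (hout : ∀ i ∉ C ∪ T, ∀ j ∈ C ∪ T, M i j = 0) (t : ℕ) :
    (M ^ (t + 1)).submatrix ((↑) : T → ι) ((↑) : C → ι) =
      M.submatrix ((↑) : T → ι) ((↑) : T → ι) * (M ^ t).submatrix ((↑) : T → ι) ((↑) : C → ι) +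
        M.submatrix ((↑) : T → ι) ((↑) : C → ι) * M.submatrix ((↑) : C → ι) ((↑) : C → ι) ^ t := by
  rw [← submatrix_pow_of_closed hC]
  ext i j
  have hunreached : ∀ l ∉ C ∪ T, M i l * (M ^ t) l j = 0 := fun l hl => by
    have hclosed : ∀ i ∈ (C ∪ T)ᶜ, ∀ j ∉ (C ∪ T)ᶜ, M i j = 0 := fun i hi j hj =>
      hout i (mem_compl.mp hi) j (not_not.mp (mem_compl.not.mp hj))
    rw [pow_apply_eq_zero_of_closed hclosed t (mem_compl.mpr hl) (by simp [j.2]), mul_zero]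
  rw [pow_succ', submatrix_apply, mul_apply,
    ← Fintype.sum_subset fun l hl => by_contra fun h => hl (hunreached l h), sum_union hCT,
    add_comm, ← sum_coe_sort T, ← sum_coe_sort C]
  rfl

end Closed

theorem eq_pow_mul_add_sum_of_succ_eq {m k α : Type*} [Fintype m] [DecidableEq m]
    [Semiring α] {a : Matrix m m α} {X c : ℕ → Matrix m k α}
    (hX : ∀ t, X (t + 1) = a * X t + c t) (t : ℕ) :
    X t = a ^ t * X 0 + ∑ s ∈ range t, a ^ s * c (t - 1 - s) := by
  induction t with
  | zero => simp
  | succ t ih =>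
    rw [hX, ih, sum_range_succ', Matrix.mul_add, Matrix.mul_sum]
    simp only [← Matrix.mul_assoc, ← pow_succ', pow_zero, Matrix.one_mul]
    rw [add_assoc, Nat.add_sub_cancel, Nat.sub_zero]
    congr 2
    exact sum_congr rfl fun s _ => by rw [Nat.sub_sub, add_comm 1 s]

theorem isUnit_one_sub_of_tendsto_pow_zero {m K : Type*} [Fintype m] [DecidableEq m]
    [Field K] [TopologicalSpace K] [IsTopologicalRing K] [T2Space K] {a : Matrix m m K}
    (h : Tendsto (a ^ ·) atTop (𝓝 0)) : IsUnit (1 - a) := by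
  rw [isUnit_iff_isUnit_det, isUnit_iff_ne_zero]
  intro hdet
  obtain ⟨v, hv0, hv⟩ := exists_mulVec_eq_zero_iff.mpr hdet
  rw [sub_mulVec, one_mulVec, sub_eq_zero] at hv
  have hfix : ∀ t, (a ^ t) *ᵥ v = v := fun t => by
    induction t with
    | zero => simp
    | succ t ih => rw [pow_succ, ← mulVec_mulVec, ← hv, ih]
  have hlim : Tendsto (fun t => (a ^ t) *ᵥ v) atTop (𝓝 (0 *ᵥ v)) :=
    ((continuous_id.matrix_mulVec continuous_const).tendsto 0).comp h
  rw [funext hfix, zero_mulVec] at hlim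
  exact hv0 (tendsto_nhds_unique tendsto_const_nhds hlim)

section LinftyOp

open scoped Matrix.Norms.Operator

theorem tendsto_zero_of_succ_eq_mul_add {m k α : Type*} [Fintype m] [DecidableEq m] [Fintype k]
    [NormedRing α] {a : Matrix m m α} (ha : Tendsto (a ^ ·) atTop (𝓝 0)) {E d : ℕ → Matrix m k α}
    (hE : ∀ t, E (t + 1) = a * E t + d t) (hd : Tendsto d atTop (𝓝 0)) :
    Tendsto E atTop (𝓝 0) := by
  have hsum := summable_norm_pow_of_tendsto_pow_zero ha
  rw [funext (eq_pow_mul_add_sum_of_succ_eq hE), ← add_zero (0 : Matrix m k α)]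
  refine Tendsto.add ?_ ?_
  · have h0 : Tendsto (fun t => ‖a ^ t‖ * ‖E 0‖) atTop (𝓝 0) := by
      simpa only [zero_mul] using hsum.tendsto_atTop_zero.mul_const ‖E 0‖
    exact squeeze_zero_norm (fun t => linfty_opNorm_mul (a ^ t) (E 0)) h0
  · have hb : ∀ t, ‖∑ s ∈ range t, a ^ s * d (t - 1 - s)‖
        ≤ ∑ s ∈ range t, ‖a ^ s‖ * ‖d (t - 1 - s)‖ := fun t =>
      (norm_sum_le _ _).trans (sum_le_sum fun s _ => linfty_opNorm_mul _ _)
    exact squeeze_zero_norm hb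
      (tendsto_sum_range_mul_of_summable_of_tendsto_zero hsum (v := (‖d ·‖)) (tendsto_norm_zero.comp hd))

end LinftyOp

theorem tendsto_of_succ_eq_mul_add {m k K : Type*} [Fintype m] [DecidableEq m] [Fintype k]
    [NormedField K] {a : Matrix m m K} (ha : Tendsto (a ^ ·) atTop (𝓝 0))
    {X c : ℕ → Matrix m k K} {c₀ : Matrix m k K} (hX : ∀ t, X (t + 1) = a * X t + c t)
    (hc : Tendsto c atTop (𝓝 c₀)) : Tendsto X atTop (𝓝 ((1 - a)⁻¹ * c₀)) := by
  set L := (1 - a)⁻¹ * c₀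
  have hL : L = a * L + c₀ := by
    have hdet := (isUnit_iff_isUnit_det _).mp (isUnit_one_sub_of_tendsto_pow_zero ha)
    have h1 : (1 - a) * L = c₀ := by
      rw [← Matrix.mul_assoc, mul_nonsing_inv _ hdet, Matrix.one_mul]
    rw [Matrix.sub_mul, Matrix.one_mul] at h1
    exact sub_eq_iff_eq_add'.mp h1
  rw [← tendsto_sub_nhds_zero_iff]
  refine tendsto_zero_of_succ_eq_mul_add ha (d := fun t => c t - c₀) (fun t => ?_)
    (tendsto_sub_nhds_zero_iff.mpr hc)
  rw [hX, Matrix.mul_sub]; nth_rw 1 [hL]; abel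

end Matrix

theorem local_causality_distribution_general
    (n : ℕ) (Ω : Matrix (Fin n) (Fin n) ℝ)
    (C T : Finset (Fin n)) (hdisj : Disjoint C T)
    (hC_closed : ∀ i ∈ C, ∀ j ∉ C, Ω i j = 0)
    (houtside : ∀ k : Fin n, k ∉ C → k ∉ T → ∀ j : Fin n, (j ∈ C ∨ j ∈ T) → Ω k j = 0)
    (hTe : ∀ i j : {x // x ∈ T},
      Tendsto
        (fun t : ℕ =>
          ((Ω.submatrix (fun a : {x // x ∈ T} => (a : Fin n))
              (fun a : {x // x ∈ T} => (a : Fin n))) ^ t) i j)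
        atTop (𝓝 0))
    (πc : {x // x ∈ C} → ℝ)
    (hC_limit : ∀ i j : {x // x ∈ C},
      Tendsto
        (fun t : ℕ =>
          ((Ω.submatrix (fun a : {x // x ∈ C} => (a : Fin n))
              (fun a : {x // x ∈ C} => (a : Fin n))) ^ t) i j)
        atTop (𝓝 (πc j)))
    (b : {x // x ∈ T} → ℝ)
    (hb : ∀ i : {x // x ∈ T}, b i = ∑ j ∈ C, Ω (i : Fin n) j)
    (μc : {x // x ∈ T} → ℝ)
    (hμc : μc =
      ((1 - Ω.submatrix (fun a : {x // x ∈ T} => (a : Fin n))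
          (fun a : {x // x ∈ T} => (a : Fin n)))⁻¹).mulVec b) :
    ∀ (i : {x // x ∈ T}) (j : {x // x ∈ C}),
      Tendsto (fun t : ℕ => (Ω ^ t) (i : Fin n) (j : Fin n)) atTop
        (𝓝 (πc j * μc i)) := by
  intro i j
  set B := Ω.submatrix ((↑) : T → Fin n) ((↑) : C → Fin n)
  have hrec := Matrix.submatrix_pow_succ_of_closed hdisj hC_closed
    (fun k hk l hl => houtside k (fun h => hk (mem_union_left T h))
      (fun h => hk (mem_union_right C h)) l (mem_union.mp hl))
  have hforcing : Tendsto (fun t => B * Ω.submatrix ((↑) : C → Fin n) ((↑) : C → Fin n) ^ t)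
      atTop (𝓝 (B * vecMulVec 1 πc)) :=
    ((continuous_const.matrix_mul continuous_id).tendsto _).comp
      (tendsto_pi_nhds.2 fun k => tendsto_pi_nhds.2 fun l => by simpa using hC_limit k l)
  have hBb : B *ᵥ 1 = b := funext fun k => by
    simp [hb, B, mulVec, dotProduct, sum_attach C (Ω k)]
  have hlim : Tendsto (fun t => (Ω ^ t).submatrix ((↑) : T → Fin n) ((↑) : C → Fin n)) atTop
      (𝓝 (vecMulVec μc πc)) := by
    rw [hμc, ← hBb, ← mul_vecMulVec, ← mul_vecMulVec]
    exact Matrix.tendsto_of_succ_eq_mul_add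
      (tendsto_pi_nhds.2 fun k => tendsto_pi_nhds.2 fun l => hTe k l) hrec hforcing
  have hij := tendsto_pi_nhds.1 (tendsto_pi_nhds.1 hlim i) j
  rwa [vecMulVec_apply, mul_comm] at hij

/-- Theorem 10 of the paper: for a row-stochastic `Ω` with a
closed exogeneity class `C` and a transient class `T` (no other class feeding
into `C ∪ T`), if the powers of `T_e = Ω_T` tend to zero and `(Ω_C)^t`
converges entrywise to the matrix whose rows all equal the probability vector
`π^c`, then for `i ∈ T`, `j ∈ C` the limiting variance share is
`lim_t (Ω^t) i j = π^c_j ⬝ μ^c_i`, where `μ^c = (I - T_e)⁻¹ b` and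
`b_i = ∑_{j∈C} Ω i j`. -/
theorem local_causality_distribution
    (n : ℕ) (Ω : Matrix (Fin n) (Fin n) ℝ)
    (hnonneg : ∀ i j : Fin n, 0 ≤ Ω i j)
    (hrow : ∀ i : Fin n, ∑ j, Ω i j = 1)
    (C T : Finset (Fin n)) (hdisj : Disjoint C T)
    (hC_closed : ∀ i ∈ C, ∀ j ∉ C, Ω i j = 0)
    (houtside : ∀ k : Fin n, k ∉ C → k ∉ T → ∀ j : Fin n, (j ∈ C ∨ j ∈ T) → Ω k j = 0)
    (hTe : ∀ i j : {x // x ∈ T},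
      Tendsto
        (fun t : ℕ =>
          ((Ω.submatrix (fun a : {x // x ∈ T} => (a : Fin n))
              (fun a : {x // x ∈ T} => (a : Fin n))) ^ t) i j)
        atTop (𝓝 0))
    (πc : {x // x ∈ C} → ℝ)
    (hπc_nonneg : ∀ j, 0 ≤ πc j)
    (hπc_sum : ∑ j, πc j = 1)
    (hC_limit : ∀ i j : {x // x ∈ C},
      Tendsto
        (fun t : ℕ =>
          ((Ω.submatrix (fun a : {x // x ∈ C} => (a : Fin n))
              (fun a : {x // x ∈ C} => (a : Fin n))) ^ t) i j)
        atTop (𝓝 (πc j)))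
    (b : {x // x ∈ T} → ℝ)
    (hb : ∀ i : {x // x ∈ T}, b i = ∑ j ∈ C, Ω (i : Fin n) j)
    (μc : {x // x ∈ T} → ℝ)
    (hμc : μc =
      ((1 - Ω.submatrix (fun a : {x // x ∈ T} => (a : Fin n))
          (fun a : {x // x ∈ T} => (a : Fin n)))⁻¹).mulVec b) :
    ∀ (i : {x // x ∈ T}) (j : {x // x ∈ C}),
      Tendsto (fun t : ℕ => (Ω ^ t) (i : Fin n) (j : Fin n)) atTop
        (𝓝 (πc j * μc i)) :=
  local_causality_distribution_general n Ω C T hdisj hC_closed houtside hTe πc hC_limit b hb μc hμc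
end
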